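/- Let V be a 2n-dimensional symplectic vector space with symplectic form Ω, let π : V → Q be a linear surjection onto an n-dimensional space whose kernel F = ker π is Lagrangian, and let W ⊆ V be a subspace with dim W = 2l such that Ω is nondegenerate on W and dim π(W) = l. Then dim(W ∩ F) = l, and inside F the subspaces W ∩ F and the preimage in F of the annihilator Ann(π(W)) ⊆ Q* (under the isomorphism F ≅ Q* induced by Ω) are transversal, i.e., their sum is all of F. -/

import Mathlib

/-! The key point is that the Lagrangian `F` is its own `Ω`-orthogonal, so
`F ∩ W^⊥ = (F + W)^⊥` has dimension `2n - (n + 2l - l) = n - l`. Since `Ω` is nondegenerate on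
`W`, this space meets `W ∩ F` (of dimension `2l - l = l`) only in `0`, so the two together
fill `F`. -/

open Module

theorem Submodule.finrank_inf_ker_add_finrank_map {K V Q : Type*} [DivisionRing K]
    [AddCommGroup V] [Module K V] [FiniteDimensional K V] [AddCommGroup Q] [Module K Q]
    (f : V →ₗ[K] Q) (W : Submodule K V) :
    finrank K ↥(W ⊓ LinearMap.ker f) + finrank K ↥(W.map f) = finrank K W := by
  rw [← Submodule.map_comap_subtype, Submodule.finrank_map_subtype_eq, ← LinearMap.ker_domRestrict,
    ← LinearMap.range_domRestrict, add_comm, LinearMap.finrank_range_add_finrank_ker]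

namespace LinearMap.BilinForm

variable {K V : Type*} [Field K] [AddCommGroup V] [Module K V]

theorem orthogonal_sup (B : LinearMap.BilinForm K V) (A C : Submodule K V) :
    B.orthogonal (A ⊔ C) = B.orthogonal A ⊓ B.orthogonal C := by
  refine le_antisymm (le_inf (orthogonal_le le_sup_left) (orthogonal_le le_sup_right)) ?_
  rintro x ⟨hxA, hxC⟩ y hy
  obtain ⟨a, ha, c, hc, rfl⟩ := Submodule.mem_sup.mp hy
  simp [(hxA a ha : B a x = 0), (hxC c hc : B c x = 0)]

variable [FiniteDimensional K V] {B : LinearMap.BilinForm K V}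

theorem finrank_add_finrank_orthogonal_of_nondegenerate (hB : B.Nondegenerate)
    (W : Submodule K V) : finrank K W + finrank K (B.orthogonal W) = finrank K V := by
  have := finrank_add_finrank_orthogonal' (B := B) W
  rwa [hB.ker_eq_bot, inf_bot_eq, finrank_bot, add_zero] at this

theorem orthogonal_eq_self_of_le_orthogonal (hB : B.Nondegenerate) {L : Submodule K V}
    (hL : L ≤ B.orthogonal L) (hdim : finrank K V = 2 * finrank K L) : B.orthogonal L = L := by
  refine (Submodule.eq_of_le_of_finrank_le hL ?_).symm
  have := finrank_add_finrank_orthogonal_of_nondegenerate hB L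
  omega

theorem inf_sup_inf_orthogonal_eq (hB : B.Nondegenerate) {F W : Submodule K V}
    (hF : B.orthogonal F = F) (hW : Disjoint W (B.orthogonal W))
    (hWF : 2 * finrank K ↥(W ⊓ F) = finrank K W) :
    W ⊓ F ⊔ F ⊓ B.orthogonal W = F := by
  have hF_dim := finrank_add_finrank_orthogonal_of_nondegenerate hB F
  rw [hF] at hF_dim
  have hsup_orth := finrank_add_finrank_orthogonal_of_nondegenerate hB (F ⊔ W)
  rw [orthogonal_sup, hF] at hsup_orth
  have hsup := Submodule.finrank_sup_add_finrank_inf_eq F W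
  rw [inf_comm F W] at hsup
  have hdisj : W ⊓ F ⊓ (F ⊓ B.orthogonal W) = ⊥ := (hW.mono inf_le_left inf_le_right).eq_bot
  have hsum := Submodule.finrank_sup_add_finrank_inf_eq (W ⊓ F) (F ⊓ B.orthogonal W)
  rw [hdisj, finrank_bot] at hsum
  refine Submodule.eq_of_le_of_finrank_le (sup_le inf_le_right inf_le_left) ?_
  omega

end LinearMap.BilinForm

theorem stmt_4_general (V Q : Type*) [AddCommGroup V] [Module ℝ V] [FiniteDimensional ℝ V]
    [AddCommGroup Q] [Module ℝ Q]
    (n l : ℕ) (Ω : V →ₗ[ℝ] V →ₗ[ℝ] ℝ)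
    (hΩnd : ∀ v : V, (∀ u : V, Ω v u = 0) → v = 0)
    (hV : Module.finrank ℝ V = 2 * n)
    (π : V →ₗ[ℝ] Q) (hπ : Function.Surjective π)
    (hQ : Module.finrank ℝ Q = n)
    (hLag : ∀ v ∈ LinearMap.ker π, ∀ u ∈ LinearMap.ker π, Ω v u = 0)
    (W : Submodule ℝ V) (hWdim : Module.finrank ℝ W = 2 * l)
    (hWnd : ∀ w ∈ W, (∀ w' ∈ W, Ω w w' = 0) → w = 0)
    (hπW : Module.finrank ℝ (W.map π) = l) :
    Module.finrank ℝ ↥(W ⊓ LinearMap.ker π) = l ∧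
      ∀ v ∈ LinearMap.ker π, ∃ a ∈ LinearMap.ker π,
        (∀ w ∈ W, Ω a w = 0) ∧ ∃ u ∈ W ⊓ LinearMap.ker π, v = a + u := by
  -- `orthogonal Ω.flip S` is the left `Ω`-orthogonal `{a | ∀ s ∈ S, Ω a s = 0}` of `S`.
  have hΩ : Ω.flip.Nondegenerate :=
    LinearMap.BilinForm.nondegenerate_flip_iff.mpr (.ofSeparatingLeft hΩnd)
  have hFdim : finrank ℝ (LinearMap.ker π) = n := by
    have := LinearMap.finrank_range_add_finrank_ker π
    rw [LinearMap.range_eq_top.mpr hπ, finrank_top] at this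
    omega
  have hF : LinearMap.BilinForm.orthogonal Ω.flip (LinearMap.ker π) = LinearMap.ker π :=
    LinearMap.BilinForm.orthogonal_eq_self_of_le_orthogonal hΩ
      hLag (by rw [hV, hFdim])
  have hWF : finrank ℝ ↥(W ⊓ LinearMap.ker π) = l := by
    have := Submodule.finrank_inf_ker_add_finrank_map π W
    omega
  have hW : Disjoint W (LinearMap.BilinForm.orthogonal Ω.flip W) :=
    Submodule.disjoint_def.mpr hWnd
  refine ⟨hWF, fun v hv => ?_⟩
  rw [← LinearMap.BilinForm.inf_sup_inf_orthogonal_eq hΩ hF hW (by omega)] at hv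
  obtain ⟨u, hu, a, ⟨haF, haW⟩, rfl⟩ := Submodule.mem_sup.mp hv
  exact ⟨a, haF, haW, u, hu, add_comm u a⟩

/-- Linear-algebra content of the focusing construction. For a symplectic
vector space `(V, Ω)` of dimension `2n`, a linear surjection `π : V → Q` onto an
`n`-dimensional space with Lagrangian kernel `F = ker π`, and a subspace `W ⊆ V` with
`dim W = 2l`, `Ω` nondegenerate on `W`, `dim π(W) = l`: one has `dim (W ∩ F) = l`, and
inside `F` the subspaces `W ∩ F` and `F ∩ W^⊥` (which corresponds to the preimage of
`Ann(π(W))` under the isomorphism `F ≅ Q*` induced by `Ω`) are transversal, i.e. their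
sum is all of `F`. -/
theorem stmt_4 (V Q : Type*) [AddCommGroup V] [Module ℝ V] [FiniteDimensional ℝ V]
    [AddCommGroup Q] [Module ℝ Q] [FiniteDimensional ℝ Q]
    (n l : ℕ) (Ω : V →ₗ[ℝ] V →ₗ[ℝ] ℝ)
    (hΩalt : ∀ v : V, Ω v v = 0)
    (hΩnd : ∀ v : V, (∀ u : V, Ω v u = 0) → v = 0)
    (hV : Module.finrank ℝ V = 2 * n)
    (π : V →ₗ[ℝ] Q) (hπ : Function.Surjective π)
    (hQ : Module.finrank ℝ Q = n)
    (hLag : ∀ v ∈ LinearMap.ker π, ∀ u ∈ LinearMap.ker π, Ω v u = 0)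
    (W : Submodule ℝ V) (hWdim : Module.finrank ℝ W = 2 * l)
    (hWnd : ∀ w ∈ W, (∀ w' ∈ W, Ω w w' = 0) → w = 0)
    (hπW : Module.finrank ℝ (W.map π) = l) :
    Module.finrank ℝ ↥(W ⊓ LinearMap.ker π) = l ∧
      ∀ v ∈ LinearMap.ker π, ∃ a ∈ LinearMap.ker π,
        (∀ w ∈ W, Ω a w = 0) ∧ ∃ u ∈ W ⊓ LinearMap.ker π, v = a + u :=
  stmt_4_general V Q n l Ω hΩnd hV π hπ hQ hLag W hWdim hWnd hπW
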